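/- Let q ∈ ℕ, let the nodes c ∈ ℝ^s be symmetric with parameter ζ ∈ ℝ (Πc = ζ·1 − c), and suppose A, K ∈ ℝ^{s×s} satisfy the Sylvester-type equation (S) with q_1 = q_2 = q. Then the pair (Π Aᵀ Π, Π Kᵀ Π) also satisfies (S) with q_1 = q_2 = q; consequently the persymmetric pair (½(A + ΠAᵀΠ), ½(K + ΠKᵀΠ)), which satisfies ΠXᵀΠ = X for both of its components, is also a solution of (S). -/

import Mathlib

open Matrix

/-- The Vandermonde matrix `V_q(c) ∈ ℝ^{s×q}` with entries `c_i^{j-1}`. -/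
noncomputable def vand {s : ℕ} (c : Fin s → ℝ) (q : ℕ) : Matrix (Fin s) (Fin q) ℝ :=
  Matrix.of fun i j => c i ^ (j : ℕ)

/-- The upper triangular Pascal matrix `𝒫_q` with entries `C(j-1, i-1)`. -/
noncomputable def pascal (q : ℕ) : Matrix (Fin q) (Fin q) ℝ :=
  Matrix.of fun i j => ((j : ℕ).choose (i : ℕ) : ℝ)

/-- The nilpotent matrix `Ẽ_q` whose only nonzero entries are `(Ẽ_q)_{i,i+1} = i`. -/
noncomputable def etil (q : ℕ) : Matrix (Fin q) (Fin q) ℝ :=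
  Matrix.of fun i j => if (j : ℕ) = (i : ℕ) + 1 then ((i : ℕ) + 1 : ℝ) else 0

/-- The flip permutation matrix `Π ∈ ℝ^{s×s}`, with `Π_{ij} = 1` iff `j = s+1-i`. -/
noncomputable def flipPerm (s : ℕ) : Matrix (Fin s) (Fin s) ℝ :=
  Matrix.of fun i j => if (i : ℕ) + (j : ℕ) = s - 1 then 1 else 0

/-- The Sylvester-type equation (S) with `q₁ = q₂ = q` for a pair `(A,K)`. -/
def SylvesterEq {s : ℕ} (c : Fin s → ℝ) (q : ℕ) (A K : Matrix (Fin s) (Fin s) ℝ) : Prop :=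
  (vand c q * pascal q)ᵀ * A * (vand c q * pascal q) - (vand c q)ᵀ * A * vand c q
    = (vand c q * pascal q)ᵀ * K * (vand c q * pascal q * etil q)
      + (vand c q * etil q)ᵀ * K * vand c q

/-!
Write `V = V_q(c)`, `W = V_q 𝒫_q = V_q(c + 1)`, and let `T` be the matrix of the substitution
`p(x) ↦ p(ζ + 1 - x)` on polynomials of degree `< q`. Symmetry of the nodes gives `Π W = V T`
and `Π V = W T`, and since `Ẽ_q` is differentiation, the chain rule gives `Ẽ_q T = -T Ẽ_q`.
With these, (S) for `(Π Aᵀ Π, Π Kᵀ Π)` is the transpose of `-Tᵀ (S) T` for `(A, K)`.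
The persymmetric average is then a solution because (S) is linear in `(A, K)`.
-/

namespace Matrix

variable {m n R : Type*} [Fintype m] [Fintype n] [CommRing R]

/-- `SylvesterEq c q A K` is `IsSylvesterSol (V_q 𝒫_q) V_q Ẽ_q A K`. -/
def IsSylvesterSol (W V : Matrix m n R) (E : Matrix n n R) (A K : Matrix m m R) : Prop :=
  Wᵀ * A * W - Vᵀ * A * V = Wᵀ * K * (W * E) + (V * E)ᵀ * K * V

namespace IsSylvesterSol

variable {W V : Matrix m n R} {E : Matrix n n R} {A K B L : Matrix m m R}

theorem add (h₁ : IsSylvesterSol W V E A K) (h₂ : IsSylvesterSol W V E B L) :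
    IsSylvesterSol W V E (A + B) (K + L) := by
  unfold IsSylvesterSol at *
  simp only [Matrix.mul_add, Matrix.add_mul]
  rw [add_sub_add_comm, h₁, h₂]
  abel

theorem smul (h : IsSylvesterSol W V E A K) (a : R) :
    IsSylvesterSol W V E (a • A) (a • K) := by
  unfold IsSylvesterSol at *
  simp only [Matrix.mul_smul, Matrix.smul_mul]
  rw [← smul_sub, h, smul_add]

/-- Each term `Xᵀ (J Mᵀ J) Y` of the equation for `(J Aᵀ J, J Kᵀ J)` equals `((J Y)ᵀ M (J X))ᵀ`;
the hypotheses turn that equation into the transpose of `-Tᵀ (equation for (A, K)) T`. -/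
theorem mul_transpose_mul {J : Matrix m m R} {T : Matrix n n R} (hJ : Jᵀ = J)
    (hW : J * W = V * T) (hV : J * V = W * T) (hT : E * T = -(T * E))
    (h : IsSylvesterSol W V E A K) :
    IsSylvesterSol W V E (J * Aᵀ * J) (J * Kᵀ * J) := by
  have hWE : J * (W * E) = -(V * E * T) := by
    rw [← Matrix.mul_assoc, hW, Matrix.mul_assoc, ← neg_eq_iff_eq_neg.mpr hT, Matrix.mul_neg,
      Matrix.mul_assoc]
  have hVE : J * (V * E) = -(W * E * T) := by
    rw [← Matrix.mul_assoc, hV, Matrix.mul_assoc, ← neg_eq_iff_eq_neg.mpr hT, Matrix.mul_neg,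
      Matrix.mul_assoc]
  have reflect (X Y : Matrix m n R) (M : Matrix m m R) :
      Xᵀ * (J * Mᵀ * J) * Y = ((J * Y)ᵀ * M * (J * X))ᵀ := by
    simp only [transpose_mul, transpose_transpose, hJ, Matrix.mul_assoc]
  have e₁ (M : Matrix m m R) : Wᵀ * (J * Mᵀ * J) * W = (Tᵀ * (Vᵀ * M * V) * T)ᵀ := by
    rw [reflect, hW]; simp only [transpose_mul, Matrix.mul_assoc]
  have e₂ (M : Matrix m m R) : Vᵀ * (J * Mᵀ * J) * V = (Tᵀ * (Wᵀ * M * W) * T)ᵀ := by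
    rw [reflect, hV]; simp only [transpose_mul, Matrix.mul_assoc]
  have e₃ (M : Matrix m m R) : Wᵀ * (J * Mᵀ * J) * (W * E) = -(Tᵀ * ((V * E)ᵀ * M * V) * T)ᵀ := by
    rw [reflect, hWE, hW]
    simp only [transpose_mul, transpose_neg, Matrix.neg_mul, Matrix.mul_assoc]
  have e₄ (M : Matrix m m R) : (V * E)ᵀ * (J * Mᵀ * J) * V = -(Tᵀ * (Wᵀ * M * (W * E)) * T)ᵀ := by
    rw [reflect, hVE, hV]
    simp only [transpose_mul, transpose_neg, Matrix.mul_neg, Matrix.mul_assoc]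
  rw [IsSylvesterSol, e₁, e₂, e₃, e₄, ← neg_add, add_comm, ← transpose_add, ← Matrix.add_mul,
    ← Matrix.mul_add, ← h]
  simp only [Matrix.mul_sub, Matrix.sub_mul, transpose_sub, neg_sub]

end IsSylvesterSol

theorem mul_transpose_mul_smul_add_self [DecidableEq m] {J : Matrix m m R} (hJ : Jᵀ = J)
    (hJJ : J * J = 1) (a : R) (X : Matrix m m R) :
    J * (a • (X + J * Xᵀ * J))ᵀ * J = a • (X + J * Xᵀ * J) := by
  have hJJ' : ∀ M : Matrix m m R, J * (J * M) = M := by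
    intro M; rw [← Matrix.mul_assoc, hJJ, Matrix.one_mul]
  simp only [transpose_smul, transpose_add, transpose_mul, hJ, transpose_transpose,
    Matrix.smul_mul, Matrix.mul_smul, Matrix.mul_add, Matrix.add_mul, Matrix.mul_assoc, hJJ',
    hJJ, Matrix.mul_one]
  rw [add_comm]

end Matrix

theorem flipPerm_eq_permMatrix (s : ℕ) : flipPerm s = Fin.revPerm.permMatrix ℝ := by
  ext i j
  simp only [flipPerm, of_apply, PEquiv.toMatrix_toPEquiv_apply, Fin.revPerm_apply,
    Pi.single_apply, Fin.ext_iff, Fin.val_rev]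
  have := j.isLt
  exact if_congr (by omega) rfl rfl

theorem transpose_flipPerm (s : ℕ) : (flipPerm s)ᵀ = flipPerm s := by
  rw [flipPerm_eq_permMatrix, transpose_permMatrix]
  rfl

theorem flipPerm_mul_self (s : ℕ) : flipPerm s * flipPerm s = 1 := by
  have : Fin.revPerm * Fin.revPerm = (1 : Equiv.Perm (Fin s)) := Equiv.ext Fin.rev_rev
  rw [flipPerm_eq_permMatrix, ← permMatrix_mul, this, permMatrix_one]

theorem flipPerm_mul {s n : ℕ} (M : Matrix (Fin s) (Fin n) ℝ) :
    flipPerm s * M = M.submatrix Fin.rev id := by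
  rw [flipPerm_eq_permMatrix, PEquiv.toMatrix_toPEquiv_mul]
  rfl

theorem flipPerm_mulVec {s : ℕ} (v : Fin s → ℝ) : flipPerm s *ᵥ v = v ∘ Fin.rev := by
  rw [flipPerm_eq_permMatrix, permMatrix_mulVec]
  rfl

theorem flipPerm_mul_vand {s : ℕ} (c : Fin s → ℝ) (q : ℕ) :
    flipPerm s * vand c q = vand (flipPerm s *ᵥ c) q := by
  rw [flipPerm_mul, flipPerm_mulVec]
  rfl

section AffineSubst

variable {R : Type*} [CommRing R]

def affineSubstCoeff (u a : R) (k j : ℕ) : R :=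
  (j.choose k : R) * u ^ k * a ^ (j - k)

/-- The matrix of `p(X) ↦ p(u X + a)` on polynomials of degree `< q`, in the monomial basis. -/
def affineSubstMatrix (u a : R) (q : ℕ) : Matrix (Fin q) (Fin q) R :=
  of fun k j => affineSubstCoeff u a k j

theorem sum_fin_affineSubstCoeff {q : ℕ} (u a x : R) (j : Fin q) :
    ∑ k : Fin q, x ^ (k : ℕ) * affineSubstCoeff u a k j = (u * x + a) ^ (j : ℕ) := by
  rw [add_pow, Fin.sum_univ_eq_sum_range (fun k => x ^ k * affineSubstCoeff u a k j),
    ← Finset.sum_subset (Finset.range_subset_range.mpr j.isLt)]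
  · refine Finset.sum_congr rfl fun k _ => ?_
    rw [affineSubstCoeff]
    ring
  · intro k _ hk
    rw [Finset.mem_range, not_lt] at hk
    simp [affineSubstCoeff, Nat.choose_eq_zero_of_lt (show (j : ℕ) < k by omega)]

end AffineSubst

theorem vand_mul_affineSubstMatrix {s : ℕ} (c : Fin s → ℝ) (u a : ℝ) (q : ℕ) :
    vand c q * affineSubstMatrix u a q = vand (fun i => u * c i + a) q := by
  ext i j
  simp only [mul_apply, vand, affineSubstMatrix, of_apply]
  exact sum_fin_affineSubstCoeff u a (c i) j

theorem pascal_eq_affineSubstMatrix (q : ℕ) : pascal q = affineSubstMatrix 1 1 q := by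
  ext k j
  simp [pascal, affineSubstMatrix, affineSubstCoeff]

theorem etil_mul_of_apply {q : ℕ} (f : ℕ → ℕ → ℝ) (hf : ∀ j < q, f q j = 0) (k j : Fin q) :
    (etil q * of fun k j : Fin q => f k j) k j = ((k : ℕ) + 1 : ℝ) * f (k + 1) j := by
  simp only [mul_apply, etil, of_apply]
  rw [Fin.sum_univ_eq_sum_range
    (fun l => (if l = k + 1 then ((k : ℕ) + 1 : ℝ) else 0) * f l j)]
  simp only [ite_mul, zero_mul, Finset.sum_ite_eq', Finset.mem_range]
  rw [ite_eq_left_iff]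
  intro hk
  rw [show (k : ℕ) + 1 = q by omega, hf j j.isLt, mul_zero]

theorem of_mul_etil_apply {q : ℕ} (f : ℕ → ℕ → ℝ) (k j : Fin q) :
    ((of fun k j : Fin q => f k j) * etil q) k j = ((j : ℕ) : ℝ) * f k (j - 1) := by
  simp only [mul_apply, etil, of_apply]
  rcases j with ⟨_ | m, hm⟩
  · simp
  · rw [Fin.sum_univ_eq_sum_range
      (fun l => f k l * if m + 1 = l + 1 then ((l : ℕ) + 1 : ℝ) else 0)]
    simp only [Nat.add_right_cancel_iff, mul_ite, mul_zero, Finset.sum_ite_eq, Finset.mem_range]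
    rw [if_pos (by omega), Nat.add_sub_cancel]
    push_cast
    ring

/-- The chain rule `(p(u X + a))' = u p'(u X + a)`, as `etil q` is differentiation. -/
theorem etil_mul_affineSubstMatrix (u a : ℝ) (q : ℕ) :
    etil q * affineSubstMatrix u a q = u • (affineSubstMatrix u a q * etil q) := by
  ext k j
  have hq : ∀ j < q, affineSubstCoeff u a q j = 0 := fun j hj => by
    simp [affineSubstCoeff, Nat.choose_eq_zero_of_lt hj]
  rw [affineSubstMatrix, etil_mul_of_apply _ hq, Matrix.smul_apply, of_mul_etil_apply,
    smul_eq_mul]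
  rcases j with ⟨_ | m, hm⟩
  · simp [affineSubstCoeff]
  · have h := congrArg (Nat.cast : ℕ → ℝ) (Nat.add_one_mul_choose_eq m k)
    push_cast at h
    simp only [affineSubstCoeff, Nat.add_sub_cancel, Nat.add_sub_add_right]
    push_cast
    linear_combination -u ^ ((k : ℕ) + 1) * a ^ (m - k) * h

/-- for symmetric nodes (`Πc = ζ·1 - c`), if `(A,K)` satisfies the
Sylvester-type equation (S) with `q₁ = q₂ = q`, then `(Π Aᵀ Π, Π Kᵀ Π)` satisfies (S)
as well; consequently the persymmetric pair `(½(A + ΠAᵀΠ), ½(K + ΠKᵀΠ))`,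
whose components `X` satisfy `ΠXᵀΠ = X`, is also a solution of (S). -/
theorem stmt12 (s q : ℕ) (c : Fin s → ℝ) (ζ : ℝ)
    (hsym : flipPerm s *ᵥ c = fun i => ζ - c i)
    (A K : Matrix (Fin s) (Fin s) ℝ)
    (hS : SylvesterEq c q A K) :
    SylvesterEq c q (flipPerm s * Aᵀ * flipPerm s) (flipPerm s * Kᵀ * flipPerm s) ∧
      (flipPerm s * ((1/2 : ℝ) • (A + flipPerm s * Aᵀ * flipPerm s))ᵀ * flipPerm s
          = (1/2 : ℝ) • (A + flipPerm s * Aᵀ * flipPerm s)) ∧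
      (flipPerm s * ((1/2 : ℝ) • (K + flipPerm s * Kᵀ * flipPerm s))ᵀ * flipPerm s
          = (1/2 : ℝ) • (K + flipPerm s * Kᵀ * flipPerm s)) ∧
      SylvesterEq c q ((1/2 : ℝ) • (A + flipPerm s * Aᵀ * flipPerm s))
        ((1/2 : ℝ) • (K + flipPerm s * Kᵀ * flipPerm s)) := by
  set T := affineSubstMatrix (-1) (ζ + 1) q
  have hW : flipPerm s * (vand c q * pascal q) = vand c q * T := by
    rw [← Matrix.mul_assoc, flipPerm_mul_vand, hsym, pascal_eq_affineSubstMatrix,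
      vand_mul_affineSubstMatrix, vand_mul_affineSubstMatrix]
    congr 1; ext i; ring
  have hV : flipPerm s * vand c q = vand c q * pascal q * T := by
    rw [flipPerm_mul_vand, hsym, pascal_eq_affineSubstMatrix, vand_mul_affineSubstMatrix,
      vand_mul_affineSubstMatrix]
    congr 1; ext i; ring
  have hT : etil q * T = -(T * etil q) := by rw [etil_mul_affineSubstMatrix, neg_one_smul]
  have hflip : SylvesterEq c q (flipPerm s * Aᵀ * flipPerm s) (flipPerm s * Kᵀ * flipPerm s) :=
    IsSylvesterSol.mul_transpose_mul (transpose_flipPerm s) hW hV hT hS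
  exact ⟨hflip,
    mul_transpose_mul_smul_add_self (transpose_flipPerm s) (flipPerm_mul_self s) _ A,
    mul_transpose_mul_smul_add_self (transpose_flipPerm s) (flipPerm_mul_self s) _ K,
    (IsSylvesterSol.add hS hflip).smul _⟩
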